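/- Let G be a group and a, b ∈ G satisfy a·b·a = b·a·b and a·b²·a = b² (the case n = 4). Then a⁸ = 1. -/

import Mathlib

/-!
Conjugation by `Δ = a * b * a` exchanges `a` and `b`, so the relation `a * b ^ 2 * a = b ^ 2`
has the mirror image `b * a ^ 2 * b = a ^ 2`. Since `a * x * a = x` propagates to
`a ^ n * x * a ^ n = x`, we get `a ^ 4 = (b * a ^ 2 * b) ^ 2 = b * (a ^ 2 * b ^ 2 * a ^ 2) * b = b ^ 4`,
and then `a ^ 4 * b ^ 2 * a ^ 4 = b ^ 2` becomes `b ^ 10 = b ^ 2`, i.e. `b ^ 8 = 1 = a ^ 8`.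
-/

section Braid

variable {G : Type*} [Group G] {a b : G}

theorem conj_braid_left (h : a * b * a = b * a * b) : MulAut.conj (a * b * a) a = b := by
  rw [MulAut.conj_apply, mul_inv_eq_iff_eq_mul]
  calc a * b * a * a = b * a * b * a := by rw [h]
    _ = b * (a * b * a) := by group

theorem conj_braid_right (h : a * b * a = b * a * b) : MulAut.conj (a * b * a) b = a := by
  rw [MulAut.conj_apply, mul_inv_eq_iff_eq_mul]
  calc a * b * a * b = a * (b * a * b) := by group
    _ = a * (a * b * a) := by rw [h]

theorem mul_pow_mul_eq_pow_of_braid (h : a * b * a = b * a * b) {n : ℕ}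
    (hrel : a * b ^ n * a = b ^ n) : b * a ^ n * b = a ^ n := by
  have := congrArg (MulAut.conj (a * b * a)) hrel
  rwa [map_mul _ (a * b ^ n), map_mul, map_pow, conj_braid_left h,
    conj_braid_right h] at this

end Braid

section Inversion

variable {G : Type*} [Group G] {x y : G}

theorem pow_mul_mul_pow_eq_of_mul_mul_eq (h : y * x * y = x) (n : ℕ) :
    y ^ n * x * y ^ n = x := by
  induction n with
  | zero => simp
  | succ n ih =>
    calc y ^ (n + 1) * x * y ^ (n + 1) = y * (y ^ n * x * y ^ n) * y := by group
      _ = x := by rw [ih, h]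

theorem sq_eq_pow_four_of_mul_mul_eq (hx : y * x * y = x) (hy : x * y ^ 2 * x = y ^ 2) :
    x ^ 2 = y ^ 4 :=
  calc x ^ 2 = (y * x * y) * (y * x * y) := by rw [hx, sq]
    _ = y * (x * y ^ 2 * x) * y := by simp only [sq, mul_assoc]
    _ = y ^ 4 := by rw [hy]; group

end Inversion

theorem a_pow_eight_eq_one {G : Type*} [Group G] (a b : G)
    (hbraid : a * b * a = b * a * b) (hrel : a * b ^ 2 * a = b ^ 2) : a ^ 8 = 1 := by
  have hmirror : b * a ^ 2 * b = a ^ 2 := mul_pow_mul_eq_pow_of_braid hbraid hrel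
  have ha4 : a ^ 4 = b ^ 4 := by
    rw [show 4 = 2 * 2 from rfl, pow_mul]
    exact sq_eq_pow_four_of_mul_mul_eq hmirror (pow_mul_mul_pow_eq_of_mul_mul_eq hrel 2)
  have hb8 : b ^ 8 = 1 := by
    have h := pow_mul_mul_pow_eq_of_mul_mul_eq hrel 4
    rwa [ha4, ← pow_add, ← pow_add, show 4 + 2 + 4 = 8 + 2 from rfl, pow_add,
      mul_eq_right] at h
  calc a ^ 8 = (a ^ 4) ^ 2 := by rw [← pow_mul]
    _ = (b ^ 4) ^ 2 := by rw [ha4]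
    _ = 1 := by rw [← pow_mul, hb8]
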